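/- Intuitionistic inquisitive logic InqI is not algebraizable as a weak logic: there is no tuple (Q, Σ, τ, Δ) consisting of a core-generated quasi-variety of expanded algebras with finitely equationally defined core and structural transformers satisfying (Weak-Alg1)–(Weak-Alg4) for InqI. -/
import Mathlib


inductive Fm (L : ℕ → Type) : Type
  | var : ℕ → Fm L
  | op : {n : ℕ} → L n → (Fin n → Fm L) → Fm L

variable {L : ℕ → Type}

def Fm.subst (σ : ℕ → Fm L) : Fm L → Fm L
  | .var p => σ p
  | .op f ts => .op f (fun i => (ts i).subst σ)

/-- An atomic substitution maps atoms to atoms. -/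
def Atomic (σ : ℕ → Fm L) : Prop := ∀ p, ∃ q, σ p = Fm.var q

abbrev Eqn (L : ℕ → Type) := Fm L × Fm L

def substEq (σ : ℕ → Fm L) (e : Eqn L) : Eqn L := (e.1.subst σ, e.2.subst σ)

/-- An expanded algebra: an algebra with a designated core subset. -/
structure ExpAlg (L : ℕ → Type) : Type 1 where
  carrier : Type
  interp : {n : ℕ} → L n → (Fin n → carrier) → carrier
  core : Set carrier

def ExpAlg.eval (A : ExpAlg L) (h : ℕ → A.carrier) : Fm L → A.carrier
  | .var p => h p
  | .op f ts => A.interp f (fun i => A.eval h (ts i))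

/-- A core assignment sends every atom into the core. -/
def CoreAssign (A : ExpAlg L) (h : ℕ → A.carrier) : Prop := ∀ p, h p ∈ A.core

/-- `Σ(x,A)`: the set of elements satisfying all unary equations in `S`. -/
def SigmaSet (A : ExpAlg L) (S : Set (Eqn L)) : Set A.carrier :=
  {a | ∀ e ∈ S, A.eval (fun _ => a) e.1 = A.eval (fun _ => a) e.2}

/-- The core of `A` is defined by the set of equations `S`. -/
def HasSigmaCore (A : ExpAlg L) (S : Set (Eqn L)) : Prop := A.core = SigmaSet A S

/-- Standard equational consequence over a class of expanded algebras. -/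
def EqCons (Q : Set (ExpAlg L)) (Θ : Set (Eqn L)) (e : Eqn L) : Prop :=
  ∀ A ∈ Q, ∀ h : ℕ → A.carrier,
    (∀ d ∈ Θ, A.eval h d.1 = A.eval h d.2) → A.eval h e.1 = A.eval h e.2

/-- Core equational consequence: only core assignments are considered. -/
def CoreEqCons (Q : Set (ExpAlg L)) (Θ : Set (Eqn L)) (e : Eqn L) : Prop :=
  ∀ A ∈ Q, ∀ h : ℕ → A.carrier, CoreAssign A h →
    (∀ d ∈ Θ, A.eval h d.1 = A.eval h d.2) → A.eval h e.1 = A.eval h e.2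

def IsHom {A B : ExpAlg L} (g : A.carrier → B.carrier) : Prop :=
  ∀ {n : ℕ} (f : L n) (ts : Fin n → A.carrier),
    g (A.interp f ts) = B.interp f (fun i => g (ts i))

/-- A strict embedding: injective homomorphism reflecting and preserving the core. -/
def IsStrictEmb {A B : ExpAlg L} (g : A.carrier → B.carrier) : Prop :=
  IsHom g ∧ Function.Injective g ∧ ∀ x, x ∈ A.core ↔ g x ∈ B.core

/-- `B` is (isomorphic to) the product of the family `A`, with core the product of cores. -/
def IsProductOf {ι : Type} (B : ExpAlg L) (A : ι → ExpAlg L) : Prop :=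
  ∃ π : (∀ i, (A i).carrier) → B.carrier, Function.Bijective π ∧
    (∀ {n : ℕ} (f : L n) (ts : Fin n → ∀ i, (A i).carrier),
      π (fun i => (A i).interp f (fun k => ts k i)) = B.interp f (fun k => π (ts k))) ∧
    (∀ x, π x ∈ B.core ↔ ∀ i, x i ∈ (A i).core)

/-- `B` is (isomorphic to) the ultraproduct of the family `A` modulo `U`,
with core the ultraproduct of the cores. -/
def IsUltraproductOf {ι : Type} (U : Ultrafilter ι) (B : ExpAlg L) (A : ι → ExpAlg L) : Prop :=
  ∃ π : (∀ i, (A i).carrier) → B.carrier, Function.Surjective π ∧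
    (∀ x y, π x = π y ↔ {i | x i = y i} ∈ U) ∧
    (∀ {n : ℕ} (f : L n) (ts : Fin n → ∀ i, (A i).carrier),
      π (fun i => (A i).interp f (fun k => ts k i)) = B.interp f (fun k => π (ts k))) ∧
    (∀ x, π x ∈ B.core ↔ {i | x i ∈ (A i).core} ∈ U)

/-- A quasi-variety of expanded algebras: closed under I, S, P, P_U. -/
def IsQuasivariety (Q : Set (ExpAlg L)) : Prop :=
  (∀ A B : ExpAlg L, B ∈ Q → (∃ g : A.carrier → B.carrier, IsStrictEmb g) → A ∈ Q) ∧
  (∀ (ι : Type) (A : ι → ExpAlg L) (B : ExpAlg L), (∀ i, A i ∈ Q) → IsProductOf B A → B ∈ Q) ∧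
  (∀ (ι : Type) (U : Ultrafilter ι) (A : ι → ExpAlg L) (B : ExpAlg L),
    (∀ i, A i ∈ Q) → IsUltraproductOf U B A → B ∈ Q)

/-- The subset of `A` generated by the core. -/
inductive GenFrom (A : ExpAlg L) : A.carrier → Prop
  | base (x : A.carrier) : x ∈ A.core → GenFrom A x
  | op {n : ℕ} (f : L n) (ts : Fin n → A.carrier) :
      (∀ i, GenFrom A (ts i)) → GenFrom A (A.interp f ts)

/-- An expanded algebra is core-generated if it is generated by its core. -/
def CoreGenerated (A : ExpAlg L) : Prop := ∀ x, GenFrom A x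

/-- The quasi-variety generated by a class `K`. -/
def QGen (K : Set (ExpAlg L)) : Set (ExpAlg L) := ⋂₀ {Q | K ⊆ Q ∧ IsQuasivariety Q}

/-- A core-generated quasi-variety: generated by a class of core-generated expanded algebras. -/
def CoreGenQV (Q : Set (ExpAlg L)) : Prop :=
  IsQuasivariety Q ∧ ∃ K : Set (ExpAlg L), (∀ A ∈ K, CoreGenerated A) ∧ Q = QGen K

def IsConsRel (Der : Set (Fm L) → Fm L → Prop) : Prop :=
  (∀ Γ φ, φ ∈ Γ → Der Γ φ) ∧
  (∀ (Γ Δ : Set (Fm L)) (ψ : Fm L), (∀ φ ∈ Δ, Der Γ φ) → Der Δ ψ → Der Γ ψ)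

def ClosedUnderAtomic (Der : Set (Fm L) → Fm L → Prop) : Prop :=
  ∀ σ : ℕ → Fm L, Atomic σ → ∀ Γ φ, Der Γ φ → Der (Fm.subst σ '' Γ) (Fm.subst σ φ)

def Finitary (Der : Set (Fm L) → Fm L → Prop) : Prop :=
  ∀ Γ φ, Der Γ φ → ∃ Δ : Set (Fm L), Δ ⊆ Γ ∧ Δ.Finite ∧ Der Δ φ

/-- A weak logic: a finitary consequence relation closed under atomic substitutions. -/
def IsWeakLogic (Der : Set (Fm L) → Fm L → Prop) : Prop :=
  IsConsRel Der ∧ ClosedUnderAtomic Der ∧ Finitary Der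

def tauSet (τ : Fm L → Set (Eqn L)) (Γ : Set (Fm L)) : Set (Eqn L) := ⋃ φ ∈ Γ, τ φ

def deltaSet (Δ : Fm L → Fm L → Set (Fm L)) (Θ : Set (Eqn L)) : Set (Fm L) :=
  ⋃ e ∈ Θ, Δ e.1 e.2

/-- (Weak-Alg1): `Γ ⊢ φ` iff `τ[Γ] ⊨c_Q τ(φ)`. -/
def WAlg1 (Der : Set (Fm L) → Fm L → Prop) (Q : Set (ExpAlg L))
    (τ : Fm L → Set (Eqn L)) : Prop :=
  ∀ Γ φ, Der Γ φ ↔ ∀ e ∈ τ φ, CoreEqCons Q (tauSet τ Γ) e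

/-- (Weak-Alg2): `Δ[Θ] ⊢ Δ(η,δ)` iff `Θ ⊨c_Q η ≈ δ`. -/
def WAlg2 (Der : Set (Fm L) → Fm L → Prop) (Q : Set (ExpAlg L))
    (Δ : Fm L → Fm L → Set (Fm L)) : Prop :=
  ∀ (Θ : Set (Eqn L)) (η δ : Fm L),
    (∀ ψ ∈ Δ η δ, Der (deltaSet Δ Θ) ψ) ↔ CoreEqCons Q Θ (η, δ)

/-- (Weak-Alg3): `φ ⊣⊢ Δ[τ(φ)]`. -/
def WAlg3 (Der : Set (Fm L) → Fm L → Prop) (τ : Fm L → Set (Eqn L))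
    (Δ : Fm L → Fm L → Set (Fm L)) : Prop :=
  ∀ φ, (∀ ψ ∈ deltaSet Δ (τ φ), Der {φ} ψ) ∧ Der (deltaSet Δ (τ φ)) φ

/-- (Weak-Alg4): `η ≈ δ ≡c_Q τ[Δ(η,δ)]`. -/
def WAlg4 (Q : Set (ExpAlg L)) (τ : Fm L → Set (Eqn L))
    (Δ : Fm L → Fm L → Set (Fm L)) : Prop :=
  ∀ η δ : Fm L, (∀ e ∈ tauSet τ (Δ η δ), CoreEqCons Q {(η, δ)} e) ∧
    CoreEqCons Q (tauSet τ (Δ η δ)) (η, δ)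

/-- Algebraizability of a weak logic, witnessed by a core-generated quasi-variety `Q`
with core defined by the finite equation set `S`, and structural transformers `τ`, `Δ`. -/
structure Algebraizes (Der : Set (Fm L) → Fm L → Prop) (Q : Set (ExpAlg L))
    (S : Set (Eqn L)) (τ : Fm L → Set (Eqn L)) (Δ : Fm L → Fm L → Set (Fm L)) : Prop where
  coreGenQV : CoreGenQV Q
  sigmaFin : S.Finite
  sigmaCore : ∀ A ∈ Q, HasSigmaCore A S
  tauStruct : ∀ (σ : ℕ → Fm L) (φ : Fm L), τ (Fm.subst σ φ) = substEq σ '' τ φ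
  deltaStruct : ∀ (σ : ℕ → Fm L) (x y : Fm L),
    Δ (Fm.subst σ x) (Fm.subst σ y) = Fm.subst σ '' Δ x y
  alg1 : WAlg1 Der Q τ
  alg2 : WAlg2 Der Q Δ
  alg3 : WAlg3 Der τ Δ
  alg4 : WAlg4 Q τ Δ

/-- The signature of intuitionistic inquisitive logic: ⊥, ∧, ∨, →. -/
inductive InqSig : ℕ → Type
  | bot : InqSig 0
  | and : InqSig 2
  | or : InqSig 2
  | imp : InqSig 2

namespace Inq

def fbot : Fm InqSig := .op .bot (fun i => i.elim0)
def fand (φ ψ : Fm InqSig) : Fm InqSig := .op .and ![φ, ψ]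
def forr (φ ψ : Fm InqSig) : Fm InqSig := .op .or ![φ, ψ]
def fimp (φ ψ : Fm InqSig) : Fm InqSig := .op .imp ![φ, ψ]

/-- Standard (∨-free) formulas. -/
inductive IsStd : Fm InqSig → Prop
  | var (p : ℕ) : IsStd (.var p)
  | bot (ts : Fin 0 → Fm InqSig) : IsStd (.op .bot ts)
  | and (ts : Fin 2 → Fm InqSig) : IsStd (ts 0) → IsStd (ts 1) → IsStd (.op .and ts)
  | imp (ts : Fin 2 → Fm InqSig) : IsStd (ts 0) → IsStd (ts 1) → IsStd (.op .imp ts)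

/-- The theorems of intuitionistic inquisitive logic `InqI`: axioms A1–A10
closed under modus ponens. -/
inductive InqI : Fm InqSig → Prop
  | a1 (φ ψ) : InqI (fimp φ (fimp ψ φ))
  | a2 (φ ψ χ) : InqI (fimp (fimp φ (fimp ψ χ)) (fimp (fimp φ ψ) (fimp φ χ)))
  | a3 (φ ψ) : InqI (fimp (fand φ ψ) φ)
  | a4 (φ ψ) : InqI (fimp (fand φ ψ) ψ)
  | a5 (φ ψ) : InqI (fimp φ (fimp ψ (fand φ ψ)))
  | a6 (φ ψ) : InqI (fimp φ (forr φ ψ))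
  | a7 (φ ψ) : InqI (fimp ψ (forr φ ψ))
  | a8 (φ ψ χ) : InqI (fimp (fimp φ χ) (fimp (fimp ψ χ) (fimp (forr φ ψ) χ)))
  | a9 (φ) : InqI (fimp fbot φ)
  | a10 (α φ ψ) : IsStd α → InqI (fimp (fimp α (forr φ ψ)) (forr (fimp α φ) (fimp α ψ)))
  | mp (φ ψ) : InqI (fimp φ ψ) → InqI φ → InqI ψ

def conj : List (Fm InqSig) → Fm InqSig
  | [] => fimp fbot fbot
  | φ :: l => fand φ (conj l)

/-- The consequence relation of `InqI`. -/
def InqDer (Γ : Set (Fm InqSig)) (φ : Fm InqSig) : Prop :=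
  ∃ l : List (Fm InqSig), (∀ ψ ∈ l, ψ ∈ Γ) ∧ InqI (fimp (conj l) φ)

end Inq

section NotAlgebraizableAux
open Inq

/-! ### Generic substitution lemmas -/

theorem fm_subst_subst (φ : Fm L) (σ ρ : ℕ → Fm L) :
    (φ.subst σ).subst ρ = φ.subst (fun p => (σ p).subst ρ) := by
  induction φ with
  | var p => rfl
  | op f ts ih =>
    show Fm.op f (fun i => ((ts i).subst σ).subst ρ) = Fm.op f (fun i => (ts i).subst _)
    exact congrArg _ (funext fun i => ih i)

theorem expalg_eval_subst (A : ExpAlg L) (h : ℕ → A.carrier) (σ : ℕ → Fm L) (φ : Fm L) :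
    A.eval h (φ.subst σ) = A.eval (fun p => A.eval h (σ p)) φ := by
  induction φ with
  | var p => rfl
  | op f ts ih =>
    show A.interp f (fun i => A.eval h ((ts i).subst σ)) = A.interp f _
    exact congrArg _ (funext fun i => ih i)

/-! ### A two-world team semantics -/

/-- Information states over two worlds. -/
abbrev St := Fin 2 → Bool

def Le (t s : St) : Prop := ∀ i, t i = true → s i = true

theorem Le.rfl {s : St} : Le s s := fun _ h => h

theorem Le.trans {a b c : St} (h1 : Le a b) (h2 : Le b c) : Le a c :=
  fun i h => h2 i (h1 i h)

def emp : St := fun _ => false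

/-- Team-semantics support relation over the two-world frame. -/
def Supp (val : ℕ → St → Prop) : Fm InqSig → St → Prop
  | .var p, s => val p s
  | .op .bot _, s => ∀ i, s i = false
  | .op .and ts, s => Supp val (ts 0) s ∧ Supp val (ts 1) s
  | .op .or ts, s => Supp val (ts 0) s ∨ Supp val (ts 1) s
  | .op .imp ts, s => ∀ t, Le t s → Supp val (ts 0) t → Supp val (ts 1) t

variable {val : ℕ → St → Prop}

theorem Supp_var {p : ℕ} {s : St} : Supp val (.var p) s ↔ val p s := Iff.rfl

theorem Supp_fbot {s : St} : Supp val fbot s ↔ ∀ i, s i = false := Iff.rfl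

theorem Supp_fand {φ ψ : Fm InqSig} {s : St} :
    Supp val (fand φ ψ) s ↔ Supp val φ s ∧ Supp val ψ s := by
  show Supp val φ s ∧ Supp val (![φ, ψ] 1) s ↔ _
  rw [show (![φ, ψ] 1) = ψ from rfl]

theorem Supp_forr {φ ψ : Fm InqSig} {s : St} :
    Supp val (forr φ ψ) s ↔ Supp val φ s ∨ Supp val ψ s := by
  show Supp val φ s ∨ Supp val (![φ, ψ] 1) s ↔ _
  rw [show (![φ, ψ] 1) = ψ from rfl]

theorem Supp_fimp {φ ψ : Fm InqSig} {s : St} :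
    Supp val (fimp φ ψ) s ↔ ∀ t, Le t s → Supp val φ t → Supp val ψ t := by
  show (∀ t, Le t s → Supp val φ t → Supp val (![φ, ψ] 1) t) ↔ _
  rw [show (![φ, ψ] 1) = ψ from rfl]

end NotAlgebraizableAux

section NotAlgebraizableAux2
open Inq

variable {val : ℕ → St → Prop}

theorem Supp_mono (hdc : ∀ p {t s : St}, Le t s → val p s → val p t) :
    ∀ (φ : Fm InqSig) {t s : St}, Le t s → Supp val φ s → Supp val φ t := by
  intro φ
  induction φ with
  | var p => intro t s h hs; exact hdc p h hs
  | op f ts ih =>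
    cases f with
    | bot =>
      intro t s h hs i
      cases hti : t i with
      | false => rfl
      | true => exact absurd (h i hti) (by rw [hs i]; simp)
    | and => exact fun h hs => ⟨ih 0 h hs.1, ih 1 h hs.2⟩
    | or => exact fun h hs => hs.elim (fun x => Or.inl (ih 0 h x)) (fun x => Or.inr (ih 1 h x))
    | imp => exact fun h hs t' h' hx => hs t' (h'.trans h) hx

theorem Supp_emp (hemp : ∀ p, val p emp) : ∀ φ : Fm InqSig, Supp val φ emp := by
  intro φ
  induction φ with
  | var p => exact hemp p
  | op f ts ih =>
    cases f with
    | bot => exact fun i => rfl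
    | and => exact ⟨ih 0, ih 1⟩
    | or => exact Or.inl (ih 0)
    | imp =>
      intro t ht hx
      have : t = emp := funext fun i => by
        cases hti : t i with
        | false => rfl
        | true => exact (ht i hti).symm
      rw [this]; exact ih 1
  end NotAlgebraizableAux2

section NotAlgebraizableAux3
open Inq

variable {val : ℕ → St → Prop}

def singl (i : Fin 2) : St := fun j => decide (j = i)

theorem singl_self (i : Fin 2) : singl i i = true := by simp [singl]

theorem le_singl {i : Fin 2} {s : St} (hi : s i = true) : Le (singl i) s := by
  intro j hj
  have : j = i := by simpa [singl] using hj
  rw [this]; exact hi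

theorem flat_std (hdc : ∀ p {t s : St}, Le t s → val p s → val p t)
    (hfl : ∀ p s, val p s ↔ ∀ i, s i = true → val p (singl i)) :
    ∀ {φ : Fm InqSig}, IsStd φ →
      ∀ s, Supp val φ s ↔ ∀ i, s i = true → Supp val φ (singl i) := by
  intro φ hstd
  induction hstd with
  | var p => exact hfl p
  | bot ts =>
    intro s
    constructor
    · intro h i hi; rw [h i] at hi; cases hi
    · intro h
      intro i
      cases hsi : s i with
      | false => rfl
      | true => exact absurd (h i hsi i) (by simp [singl_self])
  | and ts h0 h1 ih0 ih1 =>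
    intro s
    constructor
    · intro h i hi
      exact ⟨(ih0 s).mp h.1 i hi, (ih1 s).mp h.2 i hi⟩
    · intro h
      exact ⟨(ih0 s).mpr fun i hi => (h i hi).1, (ih1 s).mpr fun i hi => (h i hi).2⟩
  | imp ts h0 h1 ih0 ih1 =>
    intro s
    constructor
    · intro h i hi t' ht' hx
      exact h t' (ht'.trans (le_singl hi)) hx
    · intro h t ht hx
      refine (ih1 t).mpr fun j hj => ?_
      exact h j (ht j hj) (singl j) Le.rfl ((ih0 t).mp hx j hj)

theorem supp_sound
    (hdc : ∀ p {t s : St}, Le t s → val p s → val p t)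
    (hemp : ∀ p, val p emp)
    (h10 : ∀ α φ ψ, IsStd α → ∀ s,
      Supp val (fimp (fimp α (forr φ ψ)) (forr (fimp α φ) (fimp α ψ))) s) :
    ∀ {φ : Fm InqSig}, InqI φ → ∀ s, Supp val φ s := by
  intro φ h
  induction h with
  | a1 φ ψ =>
    intro s
    rw [Supp_fimp]; intro t _ h1
    rw [Supp_fimp]; intro t' h' _
    exact Supp_mono hdc φ h' h1
  | a2 φ ψ χ =>
    intro s
    simp only [Supp_fimp]
    intro t _ h1 t2 ht2 h2 t3 ht3 hx
    exact h1 t3 (ht3.trans ht2) hx t3 Le.rfl (h2 t3 ht3 hx)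
  | a3 φ ψ =>
    intro s
    simp only [Supp_fimp, Supp_fand]
    exact fun t _ h => h.1
  | a4 φ ψ =>
    intro s
    simp only [Supp_fimp, Supp_fand]
    exact fun t _ h => h.2
  | a5 φ ψ =>
    intro s
    simp only [Supp_fimp, Supp_fand]
    exact fun t _ h1 t' h' h2 => ⟨Supp_mono hdc φ h' h1, h2⟩
  | a6 φ ψ =>
    intro s
    simp only [Supp_fimp, Supp_forr]
    exact fun t _ h => Or.inl h
  | a7 φ ψ =>
    intro s
    simp only [Supp_fimp, Supp_forr]
    exact fun t _ h => Or.inr h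
  | a8 φ ψ χ =>
    intro s
    simp only [Supp_fimp, Supp_forr]
    intro t ht h1 t2 ht2 h2 t3 ht3 h3
    rcases h3 with h | h
    · exact h1 t3 (ht3.trans ht2) h
    · exact h2 t3 ht3 h
  | a9 φ =>
    intro s
    rw [Supp_fimp]
    intro t _ hb
    have : t = emp := funext fun i => hb i
    rw [this]; exact Supp_emp hemp φ
  | a10 α φ ψ hstd => exact h10 α φ ψ hstd
  | mp φ ψ h1 h2 ih1 ih2 =>
    intro s
    have := ih1 s
    rw [Supp_fimp] at this
    exact this s Le.rfl (ih2 s)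

end NotAlgebraizableAux3

section NotAlgebraizableAux4
open Inq

/-! ### The concrete valuations -/

/-- The "real" valuation: atom 1 holds on states inside world 0, atom 2 on states
inside world 1, all other atoms are trivially true. -/
def valM : ℕ → St → Prop := fun p s =>
  if p = 1 then s 1 = false else if p = 2 then s 0 = false else True

/-- The proposition expressed by `x₁ ∨ x₂` in `valM`. -/
def Uprop (s : St) : Prop := s 1 = false ∨ s 0 = false

/-- The constant valuation sending every atom to `Uprop`. -/
def valU : ℕ → St → Prop := fun _ => Uprop

theorem hdcM : ∀ p {t s : St}, Le t s → valM p s → valM p t := by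
  intro p t s hle h
  have key : ∀ j : Fin 2, s j = false → t j = false := fun j hj => by
    cases htj : t j with
    | false => rfl
    | true => rw [hle j htj] at hj; exact hj
  by_cases h1 : p = 1
  · simp only [valM, if_pos h1] at h ⊢; exact key 1 h
  by_cases h2 : p = 2
  · simp only [valM, if_neg h1, if_pos h2] at h ⊢; exact key 0 h
  · simp only [valM, if_neg h1, if_neg h2]

theorem hempM : ∀ p, valM p emp := by
  intro p; unfold valM emp; split <;> [rfl; skip]; split <;> trivial

theorem hflM : ∀ p s, valM p s ↔ ∀ i, s i = true → valM p (singl i) := by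
  intro p s
  unfold valM
  split
  · constructor
    · intro h i hi
      rw [show (singl i 1 = false) ↔ ¬ i = 1 by simp [singl, eq_comm]]
      intro he; rw [he] at hi; rw [h] at hi; cases hi
    · intro h
      cases h1 : s 1 with
      | false => rfl
      | true => have := h 1 h1; simp [singl] at this
  · split
    · constructor
      · intro h i hi
        rw [show (singl i 0 = false) ↔ ¬ i = 0 by simp [singl, eq_comm]]
        intro he; rw [he] at hi; rw [h] at hi; cases hi
      · intro h
        cases h0 : s 0 with
        | false => rfl
        | true => have := h 0 h0; simp [singl] at this
    · simp

theorem hdcU : ∀ p {t s : St}, Le t s → valU p s → valU p t := by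
  intro p t s hle h
  rcases h with h | h
  · left
    cases hti : t 1 with
    | false => rfl
    | true => rw [hle 1 hti] at h; exact h
  · right
    cases hti : t 0 with
    | false => rfl
    | true => rw [hle 0 hti] at h; exact h

theorem hempU : ∀ p, valU p emp := fun _ => Or.inl rfl

/-! ### Symmetry of `valU` propositions -/

def swi : Fin 2 → Fin 2 := fun i => if i = 0 then 1 else 0

def sw (s : St) : St := fun i => s (swi i)

theorem swi_swi : ∀ i, swi (swi i) = i := by decide

theorem sw_sw (s : St) : sw (sw s) = s := funext fun i => by
  show s (swi (swi i)) = s i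
  rw [swi_swi]

theorem Le_sw {t s : St} (h : Le t s) : Le (sw t) (sw s) := fun i hi => h (swi i) hi

theorem Supp_sw : ∀ (φ : Fm InqSig) (s : St), Supp valU φ s → Supp valU φ (sw s) := by
  intro φ
  induction φ with
  | var p =>
    intro s h
    rcases h with h | h
    · right; show s (swi 0) = false; rw [show swi 0 = 1 from rfl]; exact h
    · left; show s (swi 1) = false; rw [show swi 1 = 0 from rfl]; exact h
  | op f ts ih =>
    cases f with
    | bot => exact fun s h i => h (swi i)
    | and => exact fun s h => ⟨ih 0 s h.1, ih 1 s h.2⟩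
    | or => exact fun s h => h.elim (fun x => Or.inl (ih 0 s x)) (fun x => Or.inr (ih 1 s x))
    | imp =>
      intro s h t ht hx
      have h1 : Le (sw t) s := by
        have := Le_sw ht; rw [sw_sw] at this; exact this
      have h2 : Supp valU (ts 0) (sw t) := ih 0 t hx
      have h3 := h (sw t) h1 h2
      have h4 := ih 1 (sw t) h3
      rw [sw_sw] at h4; exact h4

/-! ### States -/

def stW : St := fun _ => true
def stA : St := fun j => decide (j = 0)
def stB : St := fun j => decide (j = 1)

theorem sw_stA : sw stA = stB := by
  funext i
  show stA (swi i) = stB i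
  fin_cases i <;> rfl

theorem sw_stB : sw stB = stA := by
  rw [← sw_stA, sw_sw]

theorem state_cases (s : St) : s = emp ∨ s = stA ∨ s = stB ∨ s = stW := by
  cases h0 : s 0 with
  | false =>
    cases h1 : s 1 with
    | false =>
      left; funext i; fin_cases i <;> simp [emp, h0, h1] <;> assumption
    | true =>
      right; right; left; funext i; fin_cases i <;> simp [stB, h0, h1] <;> assumption
  | true =>
    cases h1 : s 1 with
    | false =>
      right; left; funext i; fin_cases i <;> simp [stA, h0, h1] <;> assumption
    | true =>
      right; right; right; funext i; fin_cases i <;> simp [stW, h0, h1] <;> assumption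

theorem le_stW (s : St) : Le s stW := fun i _ => rfl

/-! ### Comparability of propositions under `valU` -/

theorem supp_compare (φ ψ : Fm InqSig) :
    (∀ s, Supp valU φ s → Supp valU ψ s) ∨ (∀ s, Supp valU ψ s → Supp valU φ s) := by
  by_cases hφW : Supp valU φ stW
  · right; intro s _; exact Supp_mono hdcU φ (le_stW s) hφW
  by_cases hψW : Supp valU ψ stW
  · left; intro s _; exact Supp_mono hdcU ψ (le_stW s) hψW
  by_cases hφa : Supp valU φ stA
  · right
    intro s hs
    rcases state_cases s with rfl | rfl | rfl | rfl
    · exact Supp_emp hempU φ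
    · exact hφa
    · rw [← sw_stA]; exact Supp_sw φ stA hφa
    · exact absurd hs hψW
  · left
    intro s hs
    rcases state_cases s with rfl | rfl | rfl | rfl
    · exact Supp_emp hempU ψ
    · exact absurd hs hφa
    · have := Supp_sw φ stB hs
      rw [sw_stB] at this
      exact absurd this hφa
    · exact absurd hs hφW

/-! ### The split axiom -/

theorem h10U : ∀ α φ ψ, IsStd α → ∀ s,
    Supp valU (fimp (fimp α (forr φ ψ)) (forr (fimp α φ) (fimp α ψ))) s := by
  intro α φ ψ _ s
  rw [Supp_fimp]
  intro t _ h1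
  rw [Supp_fimp] at h1
  rw [Supp_forr]
  rcases supp_compare φ ψ with hle | hle
  · right
    rw [Supp_fimp]
    intro t' ht' hα
    have := h1 t' ht' hα
    rw [Supp_forr] at this
    exact this.elim (fun h => hle t' h) id
  · left
    rw [Supp_fimp]
    intro t' ht' hα
    have := h1 t' ht' hα
    rw [Supp_forr] at this
    exact this.elim id (fun h => hle t' h)

theorem h10M : ∀ α φ ψ, IsStd α → ∀ s,
    Supp valM (fimp (fimp α (forr φ ψ)) (forr (fimp α φ) (fimp α ψ))) s := by
  intro α φ ψ hstd s
  rw [Supp_fimp]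
  intro t ht h1
  rw [Supp_fimp] at h1
  rw [Supp_forr]
  by_contra hc
  push_neg at hc
  obtain ⟨hcφ, hcψ⟩ := hc
  rw [Supp_fimp] at hcφ hcψ
  push_neg at hcφ hcψ
  obtain ⟨t1, ht1, hα1, hφ1⟩ := hcφ
  obtain ⟨t2, ht2, hα2, hψ2⟩ := hcψ
  have htu : Le (fun i => t1 i || t2 i) t := by
    intro i hi
    rcases Bool.or_eq_true_iff.mp hi with h | h
    · exact ht1 i h
    · exact ht2 i h
  have hαu : Supp valM α (fun i => t1 i || t2 i) := by
    refine (flat_std hdcM hflM hstd _).mpr fun i hi => ?_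
    rcases Bool.or_eq_true_iff.mp hi with h | h
    · exact (flat_std hdcM hflM hstd t1).mp hα1 i h
    · exact (flat_std hdcM hflM hstd t2).mp hα2 i h
  have := h1 _ htu hαu
  rw [Supp_forr] at this
  rcases this with h | h
  · exact hφ1 (Supp_mono hdcM φ (fun i hi => by rw [hi]; rfl) h)
  · exact hψ2 (Supp_mono hdcM ψ (fun i hi => by rw [hi]; simp) h)

end NotAlgebraizableAux4

section NotAlgebraizableAux5
open Inq

theorem Supp_congr {v v' : ℕ → St → Prop} (h : ∀ p s, v p s ↔ v' p s) :
    ∀ (φ : Fm InqSig) (s : St), Supp v φ s ↔ Supp v' φ s := by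
  intro φ
  induction φ with
  | var p => exact h p
  | op f ts ih =>
    cases f with
    | bot => exact fun s => Iff.rfl
    | and => exact fun s => and_congr (ih 0 s) (ih 1 s)
    | or => exact fun s => or_congr (ih 0 s) (ih 1 s)
    | imp =>
      intro s
      exact forall_congr' fun t => imp_congr Iff.rfl (imp_congr (ih 0 t) (ih 1 t))

theorem Supp_subst {v : ℕ → St → Prop} (σ : ℕ → Fm InqSig) :
    ∀ (φ : Fm InqSig) (s : St),
      Supp v (φ.subst σ) s ↔ Supp (fun p => Supp v (σ p)) φ s := by
  intro φ
  induction φ with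
  | var p => exact fun s => Iff.rfl
  | op f ts ih =>
    cases f with
    | bot => exact fun s => Iff.rfl
    | and => exact fun s => and_congr (ih 0 s) (ih 1 s)
    | or => exact fun s => or_congr (ih 0 s) (ih 1 s)
    | imp =>
      intro s
      exact forall_congr' fun t => imp_congr Iff.rfl (imp_congr (ih 0 t) (ih 1 t))

theorem Supp_conj {v : ℕ → St → Prop} :
    ∀ (l : List (Fm InqSig)) (s : St), (∀ ψ ∈ l, ∀ s', Supp v ψ s') → Supp v (conj l) s := by
  intro l
  induction l with
  | nil => exact fun s _ => fun t _ hb => hb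
  | cons ψ l' ih =>
    intro s hall
    rw [show conj (ψ :: l') = fand ψ (conj l') from rfl, Supp_fand]
    exact ⟨hall ψ (by simp) s, ih s fun χ hχ => hall χ (by simp [hχ])⟩

/-! ### Simple InqI facts -/

theorem inqI_id (φ : Fm InqSig) : InqI (fimp φ φ) :=
  InqI.mp _ _ (InqI.mp _ _ (InqI.a2 φ (fimp φ φ) φ) (InqI.a1 φ (fimp φ φ))) (InqI.a1 φ φ)

theorem inqI_conj_nil : InqI (conj []) := inqI_id fbot

theorem der_nil_of_inqI {φ : Fm InqSig} (h : InqI φ) : Inq.InqDer ∅ φ :=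
  ⟨[], by simp, InqI.mp _ _ (InqI.a1 φ (conj [])) h⟩

theorem inqI_of_der_nil {φ : Fm InqSig} (h : Inq.InqDer ∅ φ) : InqI φ := by
  obtain ⟨l, hl, hd⟩ := h
  have : l = [] := List.eq_nil_iff_forall_not_mem.mpr fun ψ hψ => (hl ψ hψ).elim
  rw [this] at hd
  exact InqI.mp _ _ hd inqI_conj_nil

/-! ### The two sound models -/

theorem soundM {φ : Fm InqSig} (h : InqI φ) : ∀ s, Supp valM φ s :=
  supp_sound hdcM hempM h10M h

theorem soundU {φ : Fm InqSig} (h : InqI φ) : ∀ s, Supp valU φ s :=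
  supp_sound hdcU hempU h10U h

/-- The key formula `u = x₁ ∨ x₂`. -/
def uF : Fm InqSig := forr (.var 1) (.var 2)

theorem Supp_uF (s : St) : Supp valM uF s ↔ Uprop s := by
  rw [show uF = forr (.var 1) (.var 2) from rfl, Supp_forr, Supp_var, Supp_var]
  show (if (1:ℕ) = 1 then s 1 = false else _) ∨ (if (2:ℕ) = 1 then _ else if (2:ℕ) = 2 then s 0 = false else _) ↔ _
  norm_num
  exact Iff.rfl

end NotAlgebraizableAux5

section NotAlgebraizableAux6
open Inq

/-- Constant substitution by `uF`. -/
def sigU : ℕ → Fm InqSig := fun _ => uF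
/-- Collapse all variables to variable 0. -/
def colla : ℕ → Fm InqSig := fun _ => .var 0
/-- Substitute `uF` for variable 0, keep all other variables. -/
def sigS : ℕ → Fm InqSig := fun p => if p = 0 then uF else .var p

/-- The split-axiom instance `(x₀ → x₁ ∨ x₂) → ((x₀ → x₁) ∨ (x₀ → x₂))`. -/
def splitF : Fm InqSig :=
  fimp (fimp (.var 0) (forr (.var 1) (.var 2)))
    (forr (fimp (.var 0) (.var 1)) (fimp (.var 0) (.var 2)))

theorem inqI_splitF : InqI splitF := InqI.a10 _ _ _ (IsStd.var 0)

end NotAlgebraizableAux6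

/-- intuitionistic inquisitive logic is not algebraizable as a
weak logic. -/
theorem inqI_not_algebraizable :
    ¬ ∃ (Q : Set (ExpAlg InqSig)) (S : Set (Eqn InqSig))
        (τ : Fm InqSig → Set (Eqn InqSig))
        (Δ : Fm InqSig → Fm InqSig → Set (Fm InqSig)),
      Algebraizes Inq.InqDer Q S τ Δ := by
  rintro ⟨Q, S, τ, Δ, H⟩
  -- Step A: the collapsed versions of the core-defining equations are valid
  -- under all core assignments.
  have hC : ∀ e ∈ S, CoreEqCons Q ∅ ((e.1).subst colla, (e.2).subst colla) := by
    intro e he A hA h hcore _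
    have hsc : A.core = SigmaSet A S := H.sigmaCore A hA
    have h0 : h 0 ∈ SigmaSet A S := hsc ▸ hcore 0
    have h1 := h0 e he
    show A.eval h ((e.1).subst colla) = A.eval h ((e.2).subst colla)
    rw [expalg_eval_subst, expalg_eval_subst]
    exact h1
  -- Step B: hence the corresponding Δ-formulas are theorems of InqI.
  have hThm : ∀ e ∈ S, ∀ χ ∈ Δ ((e.1).subst colla) ((e.2).subst colla), Inq.InqI χ := by
    intro e he χ hχ
    have h2 := (H.alg2 ∅ _ _).mpr (hC e he) χ hχ
    rw [show deltaSet Δ (∅ : Set (Eqn InqSig)) = ∅ from by simp [deltaSet]] at h2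
    exact inqI_of_der_nil h2
  -- Step C: transfer lemma: from the Δ-certificates that `uF` is core-valued,
  -- the substituted split axiom becomes derivable.
  have hKP : Inq.InqDer (⋃ e ∈ S, Δ ((e.1).subst sigU) ((e.2).subst sigU))
      (splitF.subst sigS) := by
    rw [H.alg1]
    intro e he
    rw [H.tauStruct sigS splitF] at he
    obtain ⟨e0, he0, rfl⟩ := he
    intro A hA h hcore hprem
    have hsc : A.core = SigmaSet A S := H.sigmaCore A hA
    have haS : A.eval h uF ∈ A.core := by
      rw [hsc]
      intro e1 he1
      have h4 := (H.alg4 ((e1.1).subst sigU) ((e1.2).subst sigU)).2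
      have heq : A.eval h ((e1.1).subst sigU) = A.eval h ((e1.2).subst sigU) := by
        apply h4 A hA h hcore
        intro d hd
        apply hprem
        simp only [tauSet, Set.mem_iUnion] at hd ⊢
        obtain ⟨ψ, hψ, hdψ⟩ := hd
        exact ⟨ψ, ⟨⟨e1, he1, hψ⟩, hdψ⟩⟩
      rw [expalg_eval_subst, expalg_eval_subst] at heq
      exact heq
    have hcored : CoreAssign A (fun p => A.eval h (sigS p)) := by
      intro p
      by_cases hp : p = 0
      · subst hp; exact haS
      · show A.eval h (sigS p) ∈ A.core
        have hv : sigS p = .var p := if_neg hp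
        rw [hv]; exact hcore p
    have hval := (H.alg1 ∅ splitF).mp (der_nil_of_inqI inqI_splitF) e0 he0 A hA _ hcored
      (fun d hd => absurd hd (by simp [tauSet]))
    show A.eval h ((e0.1).subst sigS) = A.eval h ((e0.2).subst sigS)
    rw [expalg_eval_subst, expalg_eval_subst]
    exact hval
  -- Step D: semantic refutation in the two-world model.
  obtain ⟨l, hlmem, hder⟩ := hKP
  have hval : ∀ ψ ∈ l, ∀ s, Supp valM ψ s := by
    intro ψ hψ
    have hm := hlmem ψ hψ
    simp only [Set.mem_iUnion] at hm
    obtain ⟨e1, he1, hψΔ⟩ := hm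
    have hrw : Δ ((e1.1).subst sigU) ((e1.2).subst sigU)
        = Fm.subst sigU '' Δ ((e1.1).subst colla) ((e1.2).subst colla) := by
      have h1 := H.deltaStruct sigU ((e1.1).subst colla) ((e1.2).subst colla)
      rw [fm_subst_subst, fm_subst_subst] at h1
      exact h1
    rw [hrw] at hψΔ
    obtain ⟨χ, hχ, rfl⟩ := hψΔ
    intro s
    rw [Supp_subst]
    exact (Supp_congr (fun p s => Supp_uF s) χ s).mpr (soundU (hThm e1 he1 χ hχ) s)
  have hsound := soundM hder stW
  rw [Supp_fimp] at hsound
  have hconj : Supp valM (Inq.conj l) stW := Supp_conj l stW hval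
  have hmain := hsound stW Le.rfl hconj
  rw [Supp_subst] at hmain
  rw [show splitF = Inq.fimp (Inq.fimp (.var 0) (Inq.forr (.var 1) (.var 2)))
    (Inq.forr (Inq.fimp (.var 0) (.var 1)) (Inq.fimp (.var 0) (.var 2))) from rfl] at hmain
  rw [Supp_fimp] at hmain
  have hant : Supp (fun p => Supp valM (sigS p))
      (Inq.fimp (.var 0) (Inq.forr (.var 1) (.var 2))) stW := by
    rw [Supp_fimp]
    intro t _ h0
    rw [Supp_forr]
    have h0' : Uprop t := (Supp_uF t).mp h0
    rcases h0' with h | h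
    · left; exact h
    · right; exact h
  have hres := hmain stW Le.rfl hant
  rw [Supp_forr] at hres
  rcases hres with h | h
  · rw [Supp_fimp] at h
    have h2 := h stB (le_stW stB) (Or.inr rfl)
    exact absurd (show stB 1 = false from h2) (by simp [stB])
  · rw [Supp_fimp] at h
    have h2 := h stA (le_stW stA) (Or.inl rfl)
    exact absurd (show stA 0 = false from h2) (by simp [stA])
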